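/- Let n = 2, p ∈ (0,2), α = 2/(2−p). With u(x,y) = y^α φ(e^x y^β), the equation det D²u = u^p on {(x,y): y>0} is equivalent to the ODE r² φ''(r)[α(α−1)φ − β r φ'] = −α(α−1) r φ φ' + (α²+β) r²(φ')² + φ^p for r = e^x y^β, provided αp = 2α − 2 (which holds exactly when α = 2/(2−p)). -/

import Mathlib

/-!
With `r = eˣ y ^ β`, functions of the shape `y ^ γ F(r)` are stable under both partial derivatives:
`∂ₓ` gives `y ^ γ (r F')(r)` and `∂_y` gives `y ^ (γ - 1) (γ F + β r F')(r)`. Applying these rules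
twice to `u = y ^ α φ(r)`, the `r⁴ φ''²` terms of `uₓₓ u_yy - uₓ_y²` cancel and the determinant is
`y ^ (2α - 2)` times a polynomial in `r, φ, φ', φ''`, while `u ^ p = y ^ (α p) φ(r) ^ p`. The scaling
`α p = 2α - 2` makes the powers of `y` cancel, and every `r > 0` is reached at `y = 1`.
-/

open Real Filter Topology

lemma ContDiffOn.hasDerivAt_deriv_deriv {f : ℝ → ℝ} {s : Set ℝ} (hf : ContDiffOn ℝ 2 f s)
    (hs : IsOpen s) {x : ℝ} (hx : x ∈ s) :
    HasDerivAt f (deriv f x) x ∧ HasDerivAt (deriv f) (deriv (deriv f) x) x :=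
  ⟨((hf.contDiffAt (hs.mem_nhds hx)).differentiableAt (by norm_num)).hasDerivAt,
    (((hf.deriv_of_isOpen hs (by norm_num : (1 : WithTop ℕ∞) + 1 ≤ 2)).contDiffAt
      (hs.mem_nhds hx)).differentiableAt (by norm_num)).hasDerivAt⟩

noncomputable def selfSimilar (γ β : ℝ) (F : ℝ → ℝ) (x y : ℝ) : ℝ := y ^ γ * F (exp x * y ^ β)

namespace selfSimilar

variable {γ β x y : ℝ} {F F' : ℝ → ℝ}

lemma hasDerivAt_fst (hF : HasDerivAt F (F' (exp x * y ^ β)) (exp x * y ^ β)) :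
    HasDerivAt (fun t => selfSimilar γ β F t y) (selfSimilar γ β (fun r => r * F' r) x y) x := by
  refine ((hF.comp x ((hasDerivAt_exp x).mul_const (y ^ β))).const_mul (y ^ γ)).congr_deriv ?_
  simp only [selfSimilar]
  ring

lemma hasDerivAt_snd (hy : 0 < y) (hF : HasDerivAt F (F' (exp x * y ^ β)) (exp x * y ^ β)) :
    HasDerivAt (selfSimilar γ β F x)
      (selfSimilar (γ - 1) β (fun r => γ * F r + β * r * F' r) x y) y := by
  have hpow (δ : ℝ) := hasDerivAt_rpow_const (x := y) (p := δ) (Or.inl hy.ne')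
  refine ((hpow γ).mul (hF.comp y ((hpow β).const_mul (exp x)))).congr_deriv ?_
  simp only [selfSimilar, Function.comp_apply, rpow_sub hy, rpow_one]
  field_simp

variable (hF : ∀ r > 0, HasDerivAt F (F' r) r) (hy : 0 < y)
include hF hy

lemma deriv_fst :
    deriv (fun t => selfSimilar γ β F t y) = fun x => selfSimilar γ β (fun r => r * F' r) x y :=
  funext fun _ => (hasDerivAt_fst (hF _ (by positivity))).deriv

lemma deriv_snd :
    deriv (selfSimilar γ β F x) y = selfSimilar (γ - 1) β (fun r => γ * F r + β * r * F' r) x y :=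
  (hasDerivAt_snd hy (hF _ (by positivity))).deriv

lemma deriv_snd_eventuallyEq :
    deriv (selfSimilar γ β F x) =ᶠ[𝓝 y]
      selfSimilar (γ - 1) β (fun r => γ * F r + β * r * F' r) x :=
  eventually_of_mem (Ioi_mem_nhds hy) fun _ hz => deriv_snd hF hz

end selfSimilar

open selfSimilar in
lemma hessianDet_selfSimilar {α β x y r : ℝ} {φ φ' φ'' : ℝ → ℝ}
    (hφ' : ∀ r > 0, HasDerivAt φ (φ' r) r) (hφ'' : ∀ r > 0, HasDerivAt φ' (φ'' r) r)
    (hy : 0 < y) (hr : exp x * y ^ β = r) :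
    deriv (deriv (fun t => selfSimilar α β φ t y)) x * deriv (deriv (selfSimilar α β φ x)) y -
        (deriv (fun t => deriv (selfSimilar α β φ t) y) x) ^ 2 =
      y ^ (2 * α - 2) * (r ^ 2 * φ'' r * (α * (α - 1) * φ r - β * r * φ' r) -
        (-(α * (α - 1)) * r * φ r * φ' r + (α ^ 2 + β) * r ^ 2 * φ' r ^ 2)) := by
  have hG : ∀ r > 0, HasDerivAt (fun r => r * φ' r) (φ' r + r * φ'' r) r := fun r hr =>
    ((hasDerivAt_id' r).mul (hφ'' r hr)).congr_deriv (by rw [one_mul])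
  have hH : ∀ r > 0, HasDerivAt (fun r => α * φ r + β * r * φ' r)
      (α * φ' r + β * (φ' r + r * φ'' r)) r := fun r hr =>
    ((hφ' r hr).const_mul α).add (by simpa [mul_assoc] using (hG r hr).const_mul β)
  have uxx : deriv (deriv fun t => selfSimilar α β φ t y) x =
      selfSimilar α β (fun r => r * (φ' r + r * φ'' r)) x y := by
    rw [deriv_fst hφ' hy, deriv_fst hG hy]
  have uyy : deriv (deriv (selfSimilar α β φ x)) y =
      selfSimilar (α - 1 - 1) β (fun r => (α - 1) * (α * φ r + β * r * φ' r) +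
        β * r * (α * φ' r + β * (φ' r + r * φ'' r))) x y := by
    rw [(deriv_snd_eventuallyEq hφ' hy).deriv_eq, deriv_snd hH hy]
  have uxy : deriv (fun t => deriv (selfSimilar α β φ t) y) x =
      selfSimilar (α - 1) β (fun r => r * (α * φ' r + β * (φ' r + r * φ'' r))) x y := by
    simp_rw [deriv_snd hφ' hy]
    rw [deriv_fst hH hy]
  rw [uxx, uyy, uxy, show 2 * α - 2 = (α - 1) + (α - 1) by ring, rpow_add hy]
  simp only [selfSimilar, hr, rpow_sub hy, rpow_one]
  field_simp
  ring

lemma selfSimilar_rpow {α β p x y : ℝ} {φ : ℝ → ℝ} (hy : 0 < y) (hφ : 0 ≤ φ (exp x * y ^ β)) :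
    selfSimilar α β φ x y ^ p = y ^ (α * p) * φ (exp x * y ^ β) ^ p := by
  rw [selfSimilar, mul_rpow (by positivity) hφ, rpow_mul hy.le]

lemma hessianDet_selfSimilar_eq_rpow_iff {p α β x y r : ℝ} {φ φ' φ'' : ℝ → ℝ}
    (hscal : α * p = 2 * α - 2)
    (hφ' : ∀ r > 0, HasDerivAt φ (φ' r) r) (hφ'' : ∀ r > 0, HasDerivAt φ' (φ'' r) r)
    (hy : 0 < y) (hr : exp x * y ^ β = r) (hφr : 0 ≤ φ r) :
    deriv (deriv (fun t => selfSimilar α β φ t y)) x * deriv (deriv (selfSimilar α β φ x)) y -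
        (deriv (fun t => deriv (selfSimilar α β φ t) y) x) ^ 2 = selfSimilar α β φ x y ^ p ↔
      r ^ 2 * φ'' r * (α * (α - 1) * φ r - β * r * φ' r) =
        -(α * (α - 1)) * r * φ r * φ' r + (α ^ 2 + β) * r ^ 2 * φ' r ^ 2 + φ r ^ p := by
  rw [hessianDet_selfSimilar hφ' hφ'' hy hr, selfSimilar_rpow hy (hr ▸ hφr), hr, hscal,
    mul_right_inj' (by positivity), sub_eq_iff_eq_add']

theorem stmt9_general (p α β : ℝ)
    (hscal : α * p = 2 * α - 2)
    (φ : ℝ → ℝ) (hφ : ContDiffOn ℝ 2 φ (Set.Ioi 0))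
    (hφpos : ∀ r > (0 : ℝ), 0 < φ r)
    (u : ℝ → ℝ → ℝ) (hu : ∀ x y, u x y = y ^ α * φ (Real.exp x * y ^ β)) :
    (∀ (x y : ℝ), 0 < y →
      deriv (deriv (fun t => u t y)) x * deriv (deriv (u x)) y -
        (deriv (fun t => deriv (u t) y) x) ^ 2 = u x y ^ p) ↔
    (∀ r > (0 : ℝ),
      r ^ 2 * deriv (deriv φ) r * (α * (α - 1) * φ r - β * r * deriv φ r) =
        -(α * (α - 1)) * r * φ r * deriv φ r +
          (α ^ 2 + β) * r ^ 2 * (deriv φ r) ^ 2 + φ r ^ p) := by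
  obtain rfl : u = selfSimilar α β φ := funext fun x => funext (hu x)
  have hφ' r (hr : 0 < r) := (hφ.hasDerivAt_deriv_deriv isOpen_Ioi (Set.mem_Ioi.2 hr)).1
  have hφ'' r (hr : 0 < r) := (hφ.hasDerivAt_deriv_deriv isOpen_Ioi (Set.mem_Ioi.2 hr)).2
  constructor
  · intro H r hr
    have hr1 : exp (log r) * 1 ^ β = r := by rw [one_rpow, mul_one, exp_log hr]
    exact (hessianDet_selfSimilar_eq_rpow_iff hscal hφ' hφ'' one_pos hr1 (hφpos r hr).le).1
      (H _ _ one_pos)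
  · intro H x y hy
    have hr : 0 < exp x * y ^ β := by positivity
    exact (hessianDet_selfSimilar_eq_rpow_iff hscal hφ' hφ'' hy rfl (hφpos _ hr).le).2 (H _ hr)

theorem stmt9 (p α β : ℝ) (hp : 0 < p) (hp2 : p < 2) (hα : α = 2 / (2 - p))
    (hscal : α * p = 2 * α - 2)
    (φ : ℝ → ℝ) (hφ : ContDiffOn ℝ 2 φ (Set.Ioi 0))
    (hφpos : ∀ r > (0 : ℝ), 0 < φ r)
    (u : ℝ → ℝ → ℝ) (hu : ∀ x y, u x y = y ^ α * φ (Real.exp x * y ^ β)) :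
    (∀ (x y : ℝ), 0 < y →
      deriv (deriv (fun t => u t y)) x * deriv (deriv (u x)) y -
        (deriv (fun t => deriv (u t) y) x) ^ 2 = u x y ^ p) ↔
    (∀ r > (0 : ℝ),
      r ^ 2 * deriv (deriv φ) r * (α * (α - 1) * φ r - β * r * deriv φ r) =
        -(α * (α - 1)) * r * φ r * deriv φ r +
          (α ^ 2 + β) * r ^ 2 * (deriv φ r) ^ 2 + φ r ^ p) :=
  stmt9_general p α β hscal φ hφ hφpos u hu
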